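/- Let d ≥ 2 be an integer and r ≥ 1 a real number. There exists a constant C depending only on d and r such that for all 0 < ρ ≤ 1/2: ρ^r ∫₀^{1/2} s^{d−2}(ρ+s²)^{1−2r} ds + ∫₀^{1/2} s^{d+r−2}(ρ+s²)^{1−2r} ds ≤ C ρ^{(d+1)/2 − (3/2)r} if r > (d+1)/3; ≤ C(1 + |log ρ|) if r = (d+1)/3; and ≤ C if r < (d+1)/3. -/

import Mathlib

/-!
Split the radial integrals at `s = √ρ`, where `ρ + s²` is comparable to `max ρ s²`.
Below `√ρ` the weight `(ρ + s²)^(1-2r)` is at most `ρ^(1-2r)`, and integrating `s^p` up to `√ρ`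
produces `ρ^((d+1)/2 - 3r/2)`. Above `√ρ` it is at most `s^(2-4r)`, and since `s ≥ √ρ ≥ ρ` the
factor `ρ^r` in the first integral is at most `s^r`, so both integrands are dominated by
`s^(d-3r)`. The tail `∫_{√ρ}^{1/2} s^(d-3r) ds` is bounded, logarithmic in `ρ`, or of order
`√ρ^(d-3r+1) = ρ^((d+1)/2 - 3r/2)` according to the sign of `d - 3r + 1`.
-/

open MeasureTheory Set Real

theorem setIntegral_Ioc_zero_rpow {p c : ℝ} (hp : -1 < p) (hc : 0 ≤ c) :
    ∫ s in Ioc 0 c, s ^ p = c ^ (p + 1) / (p + 1) := by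
  rw [← intervalIntegral.integral_of_le hc, integral_rpow (Or.inl hp),
    zero_rpow (by linarith), sub_zero]

theorem integrableOn_Ioc_rpow_of_pos {a b c : ℝ} (hc : 0 < c) :
    IntegrableOn (fun s : ℝ => s ^ a) (Ioc c b) :=
  (ContinuousOn.integrableOn_Icc (continuousOn_id.rpow_const fun _ hs =>
    Or.inl (hc.trans_le hs.1).ne')).mono_set Ioc_subset_Icc_self

theorem setIntegral_Ioc_rpow_le_of_neg_one_lt {a b c : ℝ} (ha : -1 < a) (hc : 0 ≤ c)
    (hb : 0 ≤ b) : ∫ s in Ioc c b, s ^ a ≤ b ^ (a + 1) / (a + 1) := by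
  rw [← setIntegral_Ioc_zero_rpow ha hb]
  exact setIntegral_mono_set (intervalIntegral.intervalIntegrable_rpow' ha).1
    (ae_restrict_of_forall_mem measurableSet_Ioc fun s hs => rpow_nonneg hs.1.le _)
    (Ioc_subset_Ioc_left hc).eventuallyLE

theorem setIntegral_Ioc_rpow_neg_one_le_log {a b c e : ℝ} (ha : 0 < a) (hac : a ≤ c) (hbe : b ≤ e)
    (hae : a ≤ e) : ∫ s in Ioc c b, s ^ (-1 : ℝ) ≤ log (e / a) := by
  calc ∫ s in Ioc c b, s ^ (-1 : ℝ) ≤ ∫ s in Ioc a e, s ^ (-1 : ℝ) :=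
        setIntegral_mono_set (integrableOn_Ioc_rpow_of_pos ha)
          (ae_restrict_of_forall_mem measurableSet_Ioc fun s hs => rpow_nonneg (ha.trans hs.1).le _)
          (Ioc_subset_Ioc hac hbe).eventuallyLE
    _ = log (e / a) := by
        rw [← intervalIntegral.integral_of_le hae,
          ← integral_inv (notMem_uIcc_of_lt ha (ha.trans_le hae))]
        exact intervalIntegral.integral_congr fun s _ => rpow_neg_one s

theorem setIntegral_Ioc_rpow_le_of_lt_neg_one {a b c : ℝ} (ha : a < -1) (hc : 0 < c) :
    ∫ s in Ioc c b, s ^ a ≤ -c ^ (a + 1) / (a + 1) := by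
  rw [← integral_Ioi_rpow_of_lt ha hc]
  exact setIntegral_mono_set (integrableOn_Ioi_rpow_of_lt ha hc)
    (ae_restrict_of_forall_mem measurableSet_Ioi fun s hs => rpow_nonneg (hc.trans hs).le _)
    Ioc_subset_Ioi_self.eventuallyLE

theorem setIntegral_Ioc_le_add_of_le {f g h : ℝ → ℝ} {a b c : ℝ} (hab : a ≤ b) (hac : a ≤ c)
    (hf : IntegrableOn f (Ioc a b)) (hg : IntegrableOn g (Ioc a c))
    (hh : IntegrableOn h (Ioc c b)) (hg0 : ∀ s ∈ Ioc a c, 0 ≤ g s)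
    (hfg : ∀ s ∈ Ioc a c, f s ≤ g s) (hfh : ∀ s ∈ Ioc c b, f s ≤ h s) :
    ∫ s in Ioc a b, f s ≤ (∫ s in Ioc a c, g s) + ∫ s in Ioc c b, h s := by
  have hIoc : Ioc (min c b) b = Ioc c b := by
    ext s; simp only [mem_Ioc, min_lt_iff]; grind
  have hleft : Ioc a (min c b) ⊆ Ioc a c := Ioc_subset_Ioc_right (min_le_left _ _)
  rw [← Ioc_union_Ioc_eq_Ioc (le_min hac hab) (min_le_right _ _),
    setIntegral_union (Ioc_disjoint_Ioc_of_le le_rfl) measurableSet_Ioc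
      (hf.mono_set (Ioc_subset_Ioc_right (min_le_right _ _)))
      (hf.mono_set (Ioc_subset_Ioc_left (le_min hac hab))), hIoc]
  gcongr ?_ + ?_
  · calc ∫ s in Ioc a (min c b), f s
        ≤ ∫ s in Ioc a (min c b), g s :=
          setIntegral_mono_on (hf.mono_set (Ioc_subset_Ioc_right (min_le_right _ _)))
            (hg.mono_set hleft) measurableSet_Ioc fun s hs => hfg s (hleft hs)
      _ ≤ ∫ s in Ioc a c, g s :=
          setIntegral_mono_set hg (ae_restrict_of_forall_mem measurableSet_Ioc hg0)
            hleft.eventuallyLE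
  · exact setIntegral_mono_on (hIoc ▸ hf.mono_set (Ioc_subset_Ioc_left (le_min hac hab))) hh
      measurableSet_Ioc hfh

theorem continuous_rpow_mul_add_sq_rpow {p q ρ : ℝ} (hp : 0 ≤ p) (hρ : 0 < ρ) :
    Continuous fun s : ℝ => s ^ p * (ρ + s ^ 2) ^ q :=
  (continuous_rpow_const hp).mul
    ((by fun_prop : Continuous fun s : ℝ => ρ + s ^ 2).rpow_const fun _ => Or.inl (by positivity))

theorem setIntegral_rpow_mul_add_sq_rpow_le {p q ρ b : ℝ} (hp : 0 ≤ p) (hq : q ≤ 0) (hρ : 0 < ρ)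
    (hb : 0 ≤ b) :
    ∫ s in Ioc 0 b, s ^ p * (ρ + s ^ 2) ^ q
      ≤ ρ ^ (q + (p + 1) / 2) / (p + 1) + ∫ s in Ioc (√ρ) b, s ^ (p + 2 * q) := by
  have hhead : ∀ s ∈ Ioc 0 √ρ, s ^ p * (ρ + s ^ 2) ^ q ≤ ρ ^ q * s ^ p := fun s hs => by
    rw [mul_comm]
    exact mul_le_mul_of_nonneg_right
      (rpow_le_rpow_of_nonpos hρ (le_add_of_nonneg_right (sq_nonneg s)) hq) (rpow_nonneg hs.1.le _)
  have htail : ∀ s ∈ Ioc √ρ b, s ^ p * (ρ + s ^ 2) ^ q ≤ s ^ (p + 2 * q) := fun s hs => by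
    have hs0 : 0 < s := (sqrt_nonneg ρ).trans_lt hs.1
    rw [rpow_add hs0, rpow_mul hs0.le, rpow_two]
    exact mul_le_mul_of_nonneg_left
      (rpow_le_rpow_of_nonpos (by positivity) (le_add_of_nonneg_left hρ.le) hq)
      (rpow_nonneg hs0.le _)
  calc ∫ s in Ioc 0 b, s ^ p * (ρ + s ^ 2) ^ q
      ≤ (∫ s in Ioc 0 √ρ, ρ ^ q * s ^ p) + ∫ s in Ioc (√ρ) b, s ^ (p + 2 * q) :=
        setIntegral_Ioc_le_add_of_le hb (sqrt_nonneg ρ)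
          (continuous_rpow_mul_add_sq_rpow hp hρ).integrableOn_Ioc
          ((continuous_rpow_const hp).integrableOn_Ioc.const_mul _)
          (integrableOn_Ioc_rpow_of_pos (sqrt_pos.2 hρ))
          (fun s hs => mul_nonneg (rpow_nonneg hρ.le _) (rpow_nonneg hs.1.le _)) hhead htail
    _ = ρ ^ (q + (p + 1) / 2) / (p + 1) + ∫ s in Ioc (√ρ) b, s ^ (p + 2 * q) := by
        rw [integral_const_mul, setIntegral_Ioc_zero_rpow (by linarith) (sqrt_nonneg ρ),
          sqrt_eq_rpow, ← rpow_mul hρ.le, rpow_add hρ, mul_div_assoc, one_div_mul_eq_div]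

theorem rpow_mul_setIntegral_pow_mul_add_sq_rpow_le {d : ℕ} {r ρ b : ℝ} (hd : 2 ≤ d)
    (hr : 1 / 2 ≤ r) (hρ : 0 < ρ) (hρ1 : ρ ≤ 1) (hb : 0 ≤ b) :
    ρ ^ r * ∫ s in Ioc 0 b, s ^ (d - 2) * (ρ + s ^ 2) ^ (1 - 2 * r)
      ≤ ρ ^ (((d : ℝ) + 1) / 2 - 3 / 2 * r) + ∫ s in Ioc (√ρ) b, s ^ ((d : ℝ) - 3 * r) := by
  have hd' : (2 : ℝ) ≤ d := by exact_mod_cast hd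
  have hcast : ∀ s : ℝ, s ^ (d - 2) = s ^ ((d : ℝ) - 2) := fun s => by
    rw [← rpow_natCast, Nat.cast_sub hd, Nat.cast_ofNat]
  simp_rw [hcast]
  have hhead : ρ ^ r * (ρ ^ (1 - 2 * r + ((d : ℝ) - 2 + 1) / 2) / ((d : ℝ) - 2 + 1))
      ≤ ρ ^ (((d : ℝ) + 1) / 2 - 3 / 2 * r) := by
    rw [mul_div_assoc', ← rpow_add hρ]
    calc _ ≤ ρ ^ (r + (1 - 2 * r + ((d : ℝ) - 2 + 1) / 2)) :=
          div_le_self (rpow_nonneg hρ.le _) (by linarith)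
      _ ≤ _ := rpow_le_rpow_of_exponent_ge hρ hρ1 (by linarith)
  have htail : ρ ^ r * ∫ s in Ioc (√ρ) b, s ^ ((d : ℝ) - 2 + 2 * (1 - 2 * r))
      ≤ ∫ s in Ioc (√ρ) b, s ^ ((d : ℝ) - 3 * r) := by
    rw [← integral_const_mul]
    refine setIntegral_mono_on ((integrableOn_Ioc_rpow_of_pos (sqrt_pos.2 hρ)).const_mul _)
      (integrableOn_Ioc_rpow_of_pos (sqrt_pos.2 hρ)) measurableSet_Ioc fun s hs => ?_
    have hs0 : 0 < s := (sqrt_nonneg ρ).trans_lt hs.1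
    have hρs : ρ ≤ s := (le_sqrt_self_iff.2 hρ1).trans hs.1.le
    calc ρ ^ r * s ^ ((d : ℝ) - 2 + 2 * (1 - 2 * r))
        ≤ s ^ r * s ^ ((d : ℝ) - 2 + 2 * (1 - 2 * r)) :=
          mul_le_mul_of_nonneg_right (rpow_le_rpow hρ.le hρs (by linarith)) (rpow_nonneg hs0.le _)
      _ = s ^ ((d : ℝ) - 3 * r) := by rw [← rpow_add hs0]; ring_nf
  calc _ ≤ ρ ^ r * (ρ ^ (1 - 2 * r + ((d : ℝ) - 2 + 1) / 2) / ((d : ℝ) - 2 + 1)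
        + ∫ s in Ioc (√ρ) b, s ^ ((d : ℝ) - 2 + 2 * (1 - 2 * r))) :=
        mul_le_mul_of_nonneg_left
          (setIntegral_rpow_mul_add_sq_rpow_le (by linarith) (by linarith) hρ hb)
          (rpow_nonneg hρ.le _)
    _ ≤ _ := by rw [mul_add]; exact add_le_add hhead htail

theorem setIntegral_rpow_add_mul_add_sq_rpow_le {d r ρ b : ℝ} (hdr : 2 ≤ d + r) (hr : 1 / 2 ≤ r)
    (hρ : 0 < ρ) (hb : 0 ≤ b) :
    ∫ s in Ioc 0 b, s ^ (d + r - 2) * (ρ + s ^ 2) ^ (1 - 2 * r)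
      ≤ ρ ^ ((d + 1) / 2 - 3 / 2 * r) + ∫ s in Ioc (√ρ) b, s ^ (d - 3 * r) := by
  have key := setIntegral_rpow_mul_add_sq_rpow_le (p := d + r - 2) (q := 1 - 2 * r)
    (by linarith) (by linarith) hρ hb
  rw [show 1 - 2 * r + (d + r - 2 + 1) / 2 = (d + 1) / 2 - 3 / 2 * r by ring,
    show d + r - 2 + 2 * (1 - 2 * r) = d - 3 * r by ring] at key
  refine key.trans (add_le_add_left ?_ _)
  exact div_le_self (rpow_nonneg hρ.le _) (by linarith)

theorem radial_sum_le {d : ℕ} {r ρ b : ℝ} (hd : 2 ≤ d) (hr : 1 / 2 ≤ r) (hρ : 0 < ρ)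
    (hρ1 : ρ ≤ 1) (hb : 0 ≤ b) :
    ρ ^ r * (∫ s in Ioc 0 b, s ^ (d - 2) * (ρ + s ^ 2) ^ (1 - 2 * r))
        + ∫ s in Ioc 0 b, s ^ ((d : ℝ) + r - 2) * (ρ + s ^ 2) ^ (1 - 2 * r)
      ≤ 2 * ρ ^ (((d : ℝ) + 1) / 2 - 3 / 2 * r) + 2 * ∫ s in Ioc (√ρ) b, s ^ ((d : ℝ) - 3 * r) := by
  have hd' : (2 : ℝ) ≤ d := by exact_mod_cast hd
  linarith [rpow_mul_setIntegral_pow_mul_add_sq_rpow_le hd hr hρ hρ1 hb,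
    setIntegral_rpow_add_mul_add_sq_rpow_le (d := d) (by linarith) hr hρ hb]

/-- **Radial integral evaluation** underlying the weighted `L^r` bound
`‖|x|∇²w‖_{L^r}` for the parabolic cut-off function: for `0 < ρ ≤ 1/2`, the quantity
`ρ^r ∫₀^{1/2} s^{d−2}(ρ+s²)^{1−2r} ds + ∫₀^{1/2} s^{d+r−2}(ρ+s²)^{1−2r} ds` is bounded by
`C ρ^{(d+1)/2−(3/2)r}` if `r > (d+1)/3`, by `C(1+|log ρ|)` if `r = (d+1)/3`, and by `C`
if `r < (d+1)/3`, with `C = C(d,r)`. -/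
theorem stmt_12 (d : ℕ) (hd : 2 ≤ d) (r : ℝ) (hr : 1 ≤ r) :
    ∃ C : ℝ, 0 < C ∧ ∀ ρ : ℝ, 0 < ρ → ρ ≤ 1 / 2 →
      ((((d : ℝ) + 1) / 3 < r →
        ρ ^ r * (∫ s in Ioc (0 : ℝ) (1 / 2), s ^ (d - 2) * (ρ + s ^ 2) ^ (1 - 2 * r))
          + (∫ s in Ioc (0 : ℝ) (1 / 2), s ^ ((d : ℝ) + r - 2) * (ρ + s ^ 2) ^ (1 - 2 * r))
          ≤ C * ρ ^ (((d : ℝ) + 1) / 2 - 3 / 2 * r)) ∧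
      (r = ((d : ℝ) + 1) / 3 →
        ρ ^ r * (∫ s in Ioc (0 : ℝ) (1 / 2), s ^ (d - 2) * (ρ + s ^ 2) ^ (1 - 2 * r))
          + (∫ s in Ioc (0 : ℝ) (1 / 2), s ^ ((d : ℝ) + r - 2) * (ρ + s ^ 2) ^ (1 - 2 * r))
          ≤ C * (1 + |Real.log ρ|)) ∧
      (r < ((d : ℝ) + 1) / 3 →
        ρ ^ r * (∫ s in Ioc (0 : ℝ) (1 / 2), s ^ (d - 2) * (ρ + s ^ 2) ^ (1 - 2 * r))
          + (∫ s in Ioc (0 : ℝ) (1 / 2), s ^ ((d : ℝ) + r - 2) * (ρ + s ^ 2) ^ (1 - 2 * r))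
          ≤ C)) := by
  have hd' : (2 : ℝ) ≤ d := by exact_mod_cast hd
  have bound := fun ρ (hρ : 0 < ρ) (hρ1 : ρ ≤ 1 / 2) =>
    radial_sum_le (r := r) hd (by linarith) hρ (by linarith) (by norm_num : (0 : ℝ) ≤ 1 / 2)
  rcases lt_trichotomy r (((d : ℝ) + 1) / 3) with hlt | heq | hgt
  · have ha : 0 < (d : ℝ) - 3 * r + 1 := by linarith
    refine ⟨2 + 2 * ((1 / 2 : ℝ) ^ ((d : ℝ) - 3 * r + 1) / ((d : ℝ) - 3 * r + 1)), by positivity,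
      fun ρ hρ hρ1 => ⟨fun h => absurd h hlt.not_gt, fun h => absurd h hlt.ne, fun _ => ?_⟩⟩
    have hK := setIntegral_Ioc_rpow_le_of_neg_one_lt (a := (d : ℝ) - 3 * r) (by linarith)
      (sqrt_nonneg ρ) (by norm_num : (0 : ℝ) ≤ 1 / 2)
    have hE : ρ ^ (((d : ℝ) + 1) / 2 - 3 / 2 * r) ≤ 1 :=
      rpow_le_one hρ.le (by linarith) (by linarith)
    linarith [bound ρ hρ hρ1]
  · refine ⟨2, two_pos, fun ρ hρ hρ1 =>
      ⟨fun h => absurd heq h.ne', fun _ => ?_, fun h => absurd heq h.ne⟩⟩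
    have hK := setIntegral_Ioc_rpow_neg_one_le_log hρ (le_sqrt_self_iff.2 (by linarith))
      (by norm_num : (1 : ℝ) / 2 ≤ 1) (by linarith : ρ ≤ 1)
    rw [log_div one_ne_zero hρ.ne', log_one] at hK
    have := bound ρ hρ hρ1
    rw [show ((d : ℝ) + 1) / 2 - 3 / 2 * r = 0 by rw [heq]; ring,
      show (d : ℝ) - 3 * r = -1 by rw [heq]; ring, rpow_zero] at this
    linarith [neg_le_abs (log ρ)]
  · have ha : (d : ℝ) - 3 * r + 1 < 0 := by linarith
    refine ⟨2 + 2 / -((d : ℝ) - 3 * r + 1), by have := div_pos two_pos (neg_pos.2 ha); linarith,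
      fun ρ hρ hρ1 => ⟨fun _ => ?_, fun h => absurd h hgt.ne', fun h => absurd h hgt.not_gt⟩⟩
    have hK := setIntegral_Ioc_rpow_le_of_lt_neg_one (a := (d : ℝ) - 3 * r) (b := 1 / 2)
      (by linarith) (sqrt_pos.2 hρ)
    have hsqrt : √ρ ^ ((d : ℝ) - 3 * r + 1) = ρ ^ (((d : ℝ) + 1) / 2 - 3 / 2 * r) := by
      rw [sqrt_eq_rpow, ← rpow_mul hρ.le]; ring_nf
    rw [hsqrt] at hK
    calc _ ≤ _ := bound ρ hρ hρ1
      _ ≤ 2 * ρ ^ (((d : ℝ) + 1) / 2 - 3 / 2 * r)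
          + 2 * (-ρ ^ (((d : ℝ) + 1) / 2 - 3 / 2 * r) / ((d : ℝ) - 3 * r + 1)) := by linarith
      _ = _ := by rw [neg_div, ← div_neg]; ring
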